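/- arXiv:1902.05370 — 6 statements merged into one kernel-verified Lean document; each statement's English description precedes it below -/
import Mathlib

section
/- For every real number z ≤ 0, the absolute difference between the exponential and the implicit-Euler rational approximation satisfies |e^z − 1/(1−z)| ≤ min(1, z²). -/
theorem stmt_0 (z : ℝ) (hz : z ≤ 0) :
    |Real.exp z - 1 / (1 - z)| ≤ min 1 (z ^ 2) := by
  have h1z : (0:ℝ) < 1 - z := by linarith
  have hle : Real.exp z ≤ 1 / (1 - z) := by
    have h := Real.add_one_le_exp (-z)
    have : 1 / Real.exp (-z) ≤ 1 / (1 - z) :=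
      one_div_le_one_div_of_le h1z (by linarith)
    rwa [Real.exp_neg, one_div, inv_inv] at this
  have habs : |Real.exp z - 1 / (1 - z)| = 1 / (1 - z) - Real.exp z := by
    rw [abs_sub_comm, abs_of_nonneg (by linarith)]
  rw [habs, le_min_iff]
  constructor
  · have h1 : 1 / (1 - z) ≤ 1 := by
      rw [div_le_one h1z]; linarith
    have h2 : 0 < Real.exp z := Real.exp_pos z
    linarith
  · have hlb : z + 1 ≤ Real.exp z := Real.add_one_le_exp z
    have : 1 / (1 - z) ≤ 1 + z + z ^ 2 := by
      rw [div_le_iff₀ h1z]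
      nlinarith [sq_nonneg z, mul_nonneg (sq_nonneg z) (neg_nonneg.mpr hz)]
    linarith
end

section
/- There exists an absolute constant C > 0 such that for all reals λ > 0, γ > 0, ΔT > 0 and every natural number n, one has γ·ΔT·∑_{m=1}^{n} ((1+λΔT)^{−m} − e^{−λmΔT})² ≤ C·(γ/λ)·min(1, λΔT)². -/
/-!
Put `x = λΔT`, `a = (1 + x)⁻¹` and `b = e⁻ˣ`, so that `0 ≤ b ≤ a < 1` and the claim becomes
`x ∑ (aᵐ - bᵐ)² ≤ 8 min(1, x)²`. For `x ≥ 1` drop `bᵐ`: the geometric series gives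
`∑ a²ᵐ ≤ a²/(1 - a²) = 1/(x(2 + x))`. For `x ≤ 1` combine `a(aᵐ - bᵐ) ≤ (a - b) m aᵐ` with the
local error `a - b ≤ x²` and `∑ (m aᵐ)² ≤ a²/(1 - a)³`, where `1 - a = x/(1 + x)`.
-/

open Finset Real

section Geometric

variable {q : ℝ}

lemma natCast_mul_pow_le_div_one_sub (hq0 : 0 ≤ q) (hq1 : q < 1) (m : ℕ) :
    m * q ^ m ≤ q / (1 - q) :=
  calc (m : ℝ) * q ^ m = ∑ _i ∈ Ico 1 (m + 1), q ^ m := by simp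
    _ ≤ ∑ i ∈ Ico 1 (m + 1), q ^ i :=
      sum_le_sum fun i hi => pow_le_pow_of_le_one hq0 hq1.le (Nat.lt_succ_iff.1 (mem_Ico.1 hi).2)
    _ ≤ q / (1 - q) := by simpa using geom_sum_Ico_le_of_lt_one hq0 hq1 (m := 1) (n := m + 1)

lemma sum_natCast_mul_pow_le (hq0 : 0 ≤ q) (hq1 : q < 1) (s : Finset ℕ) :
    ∑ m ∈ s, m * q ^ m ≤ q / (1 - q) ^ 2 :=
  sum_le_hasSum s (fun _ _ => by positivity) <|
    hasSum_coe_mul_geometric_of_norm_lt_one (by rwa [norm_of_nonneg hq0])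

lemma sum_sq_natCast_mul_pow_le (hq0 : 0 ≤ q) (hq1 : q < 1) (s : Finset ℕ) :
    ∑ m ∈ s, (m * q ^ m) ^ 2 ≤ q ^ 2 / (1 - q) ^ 3 := by
  have hq : 0 < 1 - q := sub_pos.2 hq1
  calc ∑ m ∈ s, (m * q ^ m) ^ 2 ≤ ∑ m ∈ s, q / (1 - q) * (m * q ^ m) := by
        refine sum_le_sum fun m _ => ?_
        rw [sq]
        exact mul_le_mul_of_nonneg_right (natCast_mul_pow_le_div_one_sub hq0 hq1 m) (by positivity)
    _ = q / (1 - q) * ∑ m ∈ s, m * q ^ m := (mul_sum ..).symm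
    _ ≤ q / (1 - q) * (q / (1 - q) ^ 2) := by
        gcongr
        exact sum_natCast_mul_pow_le hq0 hq1 s
    _ = q ^ 2 / (1 - q) ^ 3 := by field_simp

end Geometric

section PowSubPow

variable {a b : ℝ}

lemma mul_pow_sub_pow_le (hb : 0 ≤ b) (hba : b ≤ a) (m : ℕ) :
    a * (a ^ m - b ^ m) ≤ (a - b) * (m * a ^ m) := by
  rcases m with _ | m
  · simp
  have h := abs_pow_sub_pow_le a b (m + 1)
  rw [abs_of_nonneg (sub_nonneg.2 (pow_le_pow_left₀ hb hba _)), abs_of_nonneg (sub_nonneg.2 hba),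
    abs_of_nonneg hb, abs_of_nonneg (hb.trans hba), max_eq_left hba, Nat.add_sub_cancel] at h
  calc a * (a ^ (m + 1) - b ^ (m + 1)) ≤ a * ((a - b) * ↑(m + 1) * a ^ m) :=
        mul_le_mul_of_nonneg_left h (hb.trans hba)
    _ = (a - b) * (↑(m + 1) * a ^ (m + 1)) := by ring

lemma sum_sq_pow_sub_pow_le_sq_sub_div (hb : 0 ≤ b) (hba : b ≤ a) (ha : a < 1) (s : Finset ℕ) :
    ∑ m ∈ s, (a ^ m - b ^ m) ^ 2 ≤ (a - b) ^ 2 / (1 - a) ^ 3 := by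
  rcases (hb.trans hba).eq_or_lt with ha0 | ha0
  · obtain rfl : b = 0 := le_antisymm (ha0 ▸ hba) hb
    subst ha0
    simp
  suffices a ^ 2 * ∑ m ∈ s, (a ^ m - b ^ m) ^ 2 ≤ a ^ 2 * ((a - b) ^ 2 / (1 - a) ^ 3) from
    le_of_mul_le_mul_left this (by positivity)
  calc a ^ 2 * ∑ m ∈ s, (a ^ m - b ^ m) ^ 2 = ∑ m ∈ s, (a * (a ^ m - b ^ m)) ^ 2 := by
        rw [mul_sum]; simp only [mul_pow]
    _ ≤ ∑ m ∈ s, ((a - b) * (m * a ^ m)) ^ 2 := by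
        refine sum_le_sum fun m _ => pow_le_pow_left₀ ?_ (mul_pow_sub_pow_le hb hba m) 2
        exact mul_nonneg ha0.le (sub_nonneg.2 (pow_le_pow_left₀ hb hba m))
    _ = (a - b) ^ 2 * ∑ m ∈ s, (m * a ^ m) ^ 2 := by
        rw [mul_sum]; simp only [mul_pow]
    _ ≤ (a - b) ^ 2 * (a ^ 2 / (1 - a) ^ 3) := by
        gcongr
        exact sum_sq_natCast_mul_pow_le ha0.le ha s
    _ = a ^ 2 * ((a - b) ^ 2 / (1 - a) ^ 3) := by ring

lemma sum_Icc_sq_pow_sub_pow_le_sq_div (hb : 0 ≤ b) (hba : b ≤ a) (ha : a < 1) (n : ℕ) :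
    ∑ m ∈ Icc 1 n, (a ^ m - b ^ m) ^ 2 ≤ a ^ 2 / (1 - a ^ 2) := by
  have ha0 : 0 ≤ a := hb.trans hba
  calc ∑ m ∈ Icc 1 n, (a ^ m - b ^ m) ^ 2 ≤ ∑ m ∈ Ico 1 (n + 1), (a ^ 2) ^ m := by
        rw [Ico_add_one_right_eq_Icc]
        refine sum_le_sum fun m _ => ?_
        rw [← pow_mul, mul_comm, pow_mul]
        exact pow_le_pow_left₀ (sub_nonneg.2 (pow_le_pow_left₀ hb hba m))
          (sub_le_self _ (pow_nonneg hb m)) 2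
    _ ≤ a ^ 2 / (1 - a ^ 2) := by
        simpa using geom_sum_Ico_le_of_lt_one (sq_nonneg a) (pow_lt_one₀ ha0 ha two_ne_zero)
          (m := 1) (n := n + 1)

end PowSubPow

namespace Real

variable {x : ℝ}

lemma exp_neg_le_inv_one_add (hx : 0 < 1 + x) : exp (-x) ≤ (1 + x)⁻¹ := by
  rw [exp_neg]
  exact inv_anti₀ hx (by linarith [add_one_le_exp x])

lemma inv_one_add_sub_exp_neg_le_sq (hx : 0 ≤ x) : (1 + x)⁻¹ - exp (-x) ≤ x ^ 2 := by
  have h1x : 0 < 1 + x := by linarith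
  have h : (1 + x)⁻¹ ≤ 1 - x + x ^ 2 := by
    rw [inv_le_iff_one_le_mul₀ h1x]
    nlinarith [pow_nonneg hx 3]
  linarith [one_sub_le_exp_neg x]

theorem mul_sum_sq_inv_one_add_pow_sub_exp_le (hx : 0 < x) (n : ℕ) :
    x * ∑ m ∈ Icc 1 n, (((1 + x) ^ m)⁻¹ - exp (-(m * x))) ^ 2 ≤ 8 * min 1 x ^ 2 := by
  set a := (1 + x)⁻¹ with ha
  set b := exp (-x)
  have h1x : 0 < 1 + x := by linarith
  have hb : 0 ≤ b := (exp_pos _).le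
  have hba : b ≤ a := exp_neg_le_inv_one_add h1x
  have ha1 : a < 1 := inv_lt_one_of_one_lt₀ (by linarith)
  have hsummand (m : ℕ) : ((1 + x) ^ m)⁻¹ - exp (-(m * x)) = a ^ m - b ^ m := by
    rw [inv_pow, ← exp_nat_mul, mul_neg]
  simp only [hsummand]
  rcases le_total x 1 with hx1 | hx1
  · have hsum := sum_sq_pow_sub_pow_le_sq_sub_div hb hba ha1 (Icc 1 n)
    have hab : (a - b) ^ 2 ≤ (x ^ 2) ^ 2 :=
      pow_le_pow_left₀ (sub_nonneg.2 hba) (inv_one_add_sub_exp_neg_le_sq hx.le) 2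
    have h1a : 1 - a = x / (1 + x) := by rw [ha]; field_simp; ring
    calc x * ∑ m ∈ Icc 1 n, (a ^ m - b ^ m) ^ 2 ≤ x * ((x ^ 2) ^ 2 / (1 - a) ^ 3) := by
          gcongr
          exact hsum.trans (by gcongr)
      _ = x ^ 2 * (1 + x) ^ 3 := by rw [h1a]; field_simp
      _ ≤ x ^ 2 * 2 ^ 3 := by gcongr; linarith
      _ = 8 * min 1 x ^ 2 := by rw [min_eq_right hx1]; ring
  · calc x * ∑ m ∈ Icc 1 n, (a ^ m - b ^ m) ^ 2 ≤ x * (a ^ 2 / (1 - a ^ 2)) :=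
          mul_le_mul_of_nonneg_left (sum_Icc_sq_pow_sub_pow_le_sq_div hb hba ha1 n) hx.le
      _ = 1 / (2 + x) := by
          have h1a : 1 - a ^ 2 = x * (2 + x) * a ^ 2 := by rw [ha]; field_simp; ring
          have ha0 : a ≠ 0 := by positivity
          rw [h1a]; field_simp
      _ ≤ 8 * min 1 x ^ 2 := by
          rw [min_eq_left hx1, div_le_iff₀ (by linarith)]
          linarith

end Real

theorem stmt_4 :
    ∃ C : ℝ, 0 < C ∧ ∀ lam gam ΔT : ℝ, 0 < lam → 0 < gam → 0 < ΔT → ∀ n : ℕ,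
      gam * ΔT * ∑ m ∈ Finset.Icc 1 n,
          (((1 + lam * ΔT) ^ m)⁻¹ - Real.exp (-(lam * m * ΔT))) ^ 2
        ≤ C * (gam / lam) * (min 1 (lam * ΔT)) ^ 2 := by
  refine ⟨8, by norm_num, fun lam gam ΔT hlam hgam hΔT n => ?_⟩
  have hexponent (m : ℕ) : lam * m * ΔT = m * (lam * ΔT) := by ring
  simp only [hexponent]
  calc gam * ΔT * ∑ m ∈ Icc 1 n, (((1 + lam * ΔT) ^ m)⁻¹ - exp (-(m * (lam * ΔT)))) ^ 2
      = gam / lam * (lam * ΔT * ∑ m ∈ Icc 1 n,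
          (((1 + lam * ΔT) ^ m)⁻¹ - exp (-(m * (lam * ΔT)))) ^ 2) := by
        field_simp
    _ ≤ gam / lam * (8 * min 1 (lam * ΔT) ^ 2) :=
        mul_le_mul_of_nonneg_left (mul_sum_sq_inv_one_add_pow_sub_exp_le (mul_pos hlam hΔT) n)
          (div_pos hgam hlam).le
    _ = 8 * (gam / lam) * min 1 (lam * ΔT) ^ 2 := by ring
end

section
/- Let ᾱ > 0, k a natural number with k+1 < ᾱ, λ_p = (πp)² and ΔT ∈ (0,1]. Then there is a constant C (depending on k and ᾱ but not on ΔT) such that ∑_{p=1}^∞ λ_p^{−1/2−2ᾱ} · min(1, λ_p·ΔT)^{2(k+1)} ≤ C · ΔT^{2(k+1)}. -/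
open Real

theorem stmt_10 (abar : ℝ) (habar : 0 < abar) (k : ℕ) (hk : (k : ℝ) + 1 < abar) :
    ∃ C : ℝ, 0 < C ∧ ∀ ΔT : ℝ, 0 < ΔT → ΔT ≤ 1 →
      ∑' p : ℕ, ((Real.pi * ((p : ℝ) + 1)) ^ 2) ^ (-(1 / 2 : ℝ) - 2 * abar) *
          (min 1 ((Real.pi * ((p : ℝ) + 1)) ^ 2 * ΔT)) ^ (2 * (k + 1))
        ≤ C * ΔT ^ (2 * (k + 1)) := by
  set r : ℝ := -(1/2 : ℝ) - 2 * abar with hr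
  set m : ℕ := 2 * (k + 1) with hm
  set s : ℝ := 2 * r + 2 * m with hs
  have hxpos : ∀ p : ℕ, (0:ℝ) < Real.pi * ((p:ℝ)+1) := fun p => by positivity
  have hslt : s < -1 := by
    have : (m : ℝ) = 2 * ((k:ℝ) + 1) := by push_cast [hm]; ring
    rw [hs, hr, this]; nlinarith
  -- key identity
  have hkey : ∀ p : ℕ, ((Real.pi * ((p:ℝ)+1)) ^ 2) ^ r * ((Real.pi * ((p:ℝ)+1)) ^ 2) ^ m
      = (Real.pi * ((p:ℝ)+1)) ^ s := by
    intro p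
    set x := Real.pi * ((p:ℝ)+1) with hx
    have hx0 : 0 < x := hxpos p
    have h1 : (x ^ 2) ^ r = x ^ (2 * r) := by
      rw [← Real.rpow_natCast x 2, ← Real.rpow_mul hx0.le]
      norm_num
    have h2 : ((x ^ 2) ^ m : ℝ) = x ^ ((2 * m : ℕ) : ℝ) := by
      rw [← pow_mul, Real.rpow_natCast]
    rw [h1, h2, ← Real.rpow_add hx0, hs]
    push_cast
    ring_nf
  have hsum : Summable (fun p : ℕ => (Real.pi * ((p:ℝ)+1)) ^ s) := by
    have h0 : Summable (fun n : ℕ => (n:ℝ) ^ s) := Real.summable_nat_rpow.2 hslt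
    have h1 : Summable (fun p : ℕ => ((p:ℝ)+1) ^ s) := by
      have := (summable_nat_add_iff 1).2 h0
      simpa using this
    have h2 := h1.mul_left (Real.pi ^ s)
    refine h2.congr fun p => ?_
    rw [← Real.mul_rpow Real.pi_pos.le (by positivity)]
  refine ⟨(∑' p : ℕ, (Real.pi * ((p:ℝ)+1)) ^ s) + 1, ?_, ?_⟩
  · have : 0 ≤ ∑' p : ℕ, (Real.pi * ((p:ℝ)+1)) ^ s :=
      tsum_nonneg fun p => Real.rpow_nonneg (by positivity) _
    linarith
  intro ΔT hΔT hΔT1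
  have hterm : ∀ p : ℕ,
      ((Real.pi * ((p:ℝ)+1)) ^ 2) ^ r * (min 1 ((Real.pi * ((p:ℝ)+1)) ^ 2 * ΔT)) ^ m
      ≤ (Real.pi * ((p:ℝ)+1)) ^ s * ΔT ^ m := by
    intro p
    set x := Real.pi * ((p:ℝ)+1) with hx
    have hx0 : 0 < x := hxpos p
    have ha : (0:ℝ) ≤ (x ^ 2) ^ r := Real.rpow_nonneg (by positivity) _
    have hmin : (min 1 (x ^ 2 * ΔT)) ^ m ≤ (x ^ 2 * ΔT) ^ m := by
      apply pow_le_pow_left₀ (le_min zero_le_one (by positivity)) (min_le_right _ _)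
    calc (x ^ 2) ^ r * (min 1 (x ^ 2 * ΔT)) ^ m
        ≤ (x ^ 2) ^ r * (x ^ 2 * ΔT) ^ m := by
          exact mul_le_mul_of_nonneg_left hmin ha
      _ = ((x ^ 2) ^ r * (x ^ 2) ^ m) * ΔT ^ m := by rw [mul_pow (x^2) ΔT m, ← mul_assoc]
      _ = x ^ s * ΔT ^ m := by rw [hkey p]
  have hsum2 : Summable (fun p : ℕ => (Real.pi * ((p:ℝ)+1)) ^ s * ΔT ^ m) :=
    hsum.mul_right _
  have hsumL : Summable (fun p : ℕ =>
      ((Real.pi * ((p:ℝ)+1)) ^ 2) ^ r * (min 1 ((Real.pi * ((p:ℝ)+1)) ^ 2 * ΔT)) ^ m) := by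
    apply Summable.of_nonneg_of_le ?_ hterm hsum2
    intro p
    have := hxpos p
    have h1 : (0:ℝ) ≤ ((Real.pi * ((p:ℝ)+1)) ^ 2) ^ r := Real.rpow_nonneg (by positivity) _
    have h2 : (0:ℝ) ≤ min 1 ((Real.pi * ((p:ℝ)+1)) ^ 2 * ΔT) :=
      le_min zero_le_one (by positivity)
    positivity
  calc ∑' p : ℕ, ((Real.pi * ((p:ℝ)+1)) ^ 2) ^ r *
          (min 1 ((Real.pi * ((p:ℝ)+1)) ^ 2 * ΔT)) ^ m
      ≤ ∑' p : ℕ, (Real.pi * ((p:ℝ)+1)) ^ s * ΔT ^ m := Summable.tsum_le_tsum hterm hsumL hsum2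
    _ = (∑' p : ℕ, (Real.pi * ((p:ℝ)+1)) ^ s) * ΔT ^ m := tsum_mul_right
    _ ≤ ((∑' p : ℕ, (Real.pi * ((p:ℝ)+1)) ^ s) + 1) * ΔT ^ m := by
        apply mul_le_mul_of_nonneg_right (by linarith) (by positivity)
end

section
/- Let ᾱ > 0, α ∈ (0, ᾱ), k a natural number, λ_p = (πp)² and ΔT ∈ (0,1]. If k+1 ≥ α, then there is a constant C (depending on α and ᾱ but not on ΔT) such that ∑_{p=1}^∞ λ_p^{−1/2−2ᾱ} · min(1, λ_p·ΔT)^{2(k+1)} ≤ C · ΔT^{2α}. -/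
open Real

theorem stmt_11 (abar : ℝ) (habar : 0 < abar) (α : ℝ) (hα : 0 < α) (hαbar : α < abar)
    (k : ℕ) (hk : α ≤ (k : ℝ) + 1) :
    ∃ C : ℝ, 0 < C ∧ ∀ ΔT : ℝ, 0 < ΔT → ΔT ≤ 1 →
      ∑' p : ℕ, ((Real.pi * ((p : ℝ) + 1)) ^ 2) ^ (-(1 / 2 : ℝ) - 2 * abar) *
          (min 1 ((Real.pi * ((p : ℝ) + 1)) ^ 2 * ΔT)) ^ (2 * (k + 1))
        ≤ C * ΔT ^ (2 * α) := by
  set e : ℝ := -(1 / 2) - 2 * abar + 2 * α with he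
  have hπ : (1 : ℝ) < Real.pi := by
    have := Real.pi_gt_three; linarith
  have hb : ∀ n : ℕ, (0 : ℝ) < Real.pi * ((n : ℝ) + 1) := by
    intro n
    positivity
  have ha : ∀ n : ℕ, (0 : ℝ) < (Real.pi * ((n : ℝ) + 1)) ^ 2 := by
    intro n; positivity
  -- summability of the comparison series
  have hsum : Summable (fun n : ℕ => ((Real.pi * ((n : ℝ) + 1)) ^ 2) ^ e) := by
    have h1 : Summable (fun n : ℕ => ((n : ℝ) + 1) ^ (2 * e)) := by
      have h2 : Summable (fun n : ℕ => (n : ℝ) ^ (2 * e)) :=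
        Real.summable_nat_rpow.2 (by simp only [he]; linarith)
      have := (summable_nat_add_iff 1).2 h2
      simpa using this
    apply Summable.of_nonneg_of_le (fun n => Real.rpow_nonneg (ha n).le e) _ h1
    intro n
    have hle : ((n : ℝ) + 1) ^ 2 ≤ (Real.pi * ((n : ℝ) + 1)) ^ 2 := by
      have : ((n : ℝ) + 1) ≤ Real.pi * ((n : ℝ) + 1) := by nlinarith [n.cast_nonneg (α := ℝ)]
      nlinarith [n.cast_nonneg (α := ℝ)]
    have h0 : (0 : ℝ) < ((n : ℝ) + 1) ^ 2 := by positivity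
    have := Real.rpow_le_rpow_of_nonpos h0 hle (by simp only [he]; linarith : e ≤ 0)
    calc ((Real.pi * ((n : ℝ) + 1)) ^ 2) ^ e ≤ (((n : ℝ) + 1) ^ 2) ^ e := this
      _ = ((n : ℝ) + 1) ^ (2 * e) := by
          rw [← Real.rpow_natCast ((n : ℝ) + 1) 2, ← Real.rpow_mul (by positivity)]
          norm_num
  refine ⟨∑' n : ℕ, ((Real.pi * ((n : ℝ) + 1)) ^ 2) ^ e, ?_, ?_⟩
  · exact Summable.tsum_pos hsum (fun n => Real.rpow_nonneg (ha n).le e) 0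
      (Real.rpow_pos_of_pos (ha 0) e)
  · intro ΔT hT hT1
    have hterm : ∀ n : ℕ,
        ((Real.pi * ((n : ℝ) + 1)) ^ 2) ^ (-(1 / 2 : ℝ) - 2 * abar) *
          (min 1 ((Real.pi * ((n : ℝ) + 1)) ^ 2 * ΔT)) ^ (2 * (k + 1))
        ≤ ((Real.pi * ((n : ℝ) + 1)) ^ 2) ^ e * ΔT ^ (2 * α) := by
      intro n
      set a : ℝ := (Real.pi * ((n : ℝ) + 1)) ^ 2 with hadef
      have ha' : 0 < a := ha n
      set m : ℝ := min 1 (a * ΔT) with hm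
      have hm0 : 0 < m := lt_min one_pos (by positivity)
      have hm1 : m ≤ 1 := min_le_left _ _
      have hcast : m ^ (2 * (k + 1)) = m ^ ((2 * (k + 1) : ℕ) : ℝ) :=
        (Real.rpow_natCast m _).symm
      have hexp : (2 * α : ℝ) ≤ ((2 * (k + 1) : ℕ) : ℝ) := by push_cast; linarith
      have h1 : m ^ ((2 * (k + 1) : ℕ) : ℝ) ≤ m ^ (2 * α) :=
        Real.rpow_le_rpow_of_exponent_ge hm0 hm1 hexp
      have h2 : m ^ (2 * α) ≤ (a * ΔT) ^ (2 * α) :=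
        Real.rpow_le_rpow hm0.le (min_le_right _ _) (by positivity)
      have h3 : (a * ΔT) ^ (2 * α) = a ^ (2 * α) * ΔT ^ (2 * α) :=
        Real.mul_rpow ha'.le hT.le
      have h4 : m ^ (2 * (k + 1)) ≤ a ^ (2 * α) * ΔT ^ (2 * α) := by
        rw [hcast, ← h3]; exact h1.trans h2
      calc a ^ (-(1 / 2 : ℝ) - 2 * abar) * m ^ (2 * (k + 1))
          ≤ a ^ (-(1 / 2 : ℝ) - 2 * abar) * (a ^ (2 * α) * ΔT ^ (2 * α)) := by
            exact mul_le_mul_of_nonneg_left h4 (Real.rpow_nonneg ha'.le _)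
        _ = a ^ e * ΔT ^ (2 * α) := by
            rw [← mul_assoc, ← Real.rpow_add ha', he]
    have hR : Summable (fun n : ℕ =>
        ((Real.pi * ((n : ℝ) + 1)) ^ 2) ^ e * ΔT ^ (2 * α)) := hsum.mul_right _
    have hL : Summable (fun n : ℕ =>
        ((Real.pi * ((n : ℝ) + 1)) ^ 2) ^ (-(1 / 2 : ℝ) - 2 * abar) *
          (min 1 ((Real.pi * ((n : ℝ) + 1)) ^ 2 * ΔT)) ^ (2 * (k + 1))) := by
      apply Summable.of_nonneg_of_le _ hterm hR
      intro n
      have hm0 : (0 : ℝ) ≤ min 1 ((Real.pi * ((n : ℝ) + 1)) ^ 2 * ΔT) :=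
        le_min zero_le_one (by positivity)
      exact mul_nonneg (Real.rpow_nonneg (ha n).le _) (pow_nonneg hm0 _)
    calc (∑' p : ℕ, ((Real.pi * ((p : ℝ) + 1)) ^ 2) ^ (-(1 / 2 : ℝ) - 2 * abar) *
          (min 1 ((Real.pi * ((p : ℝ) + 1)) ^ 2 * ΔT)) ^ (2 * (k + 1)))
        ≤ ∑' n : ℕ, ((Real.pi * ((n : ℝ) + 1)) ^ 2) ^ e * ΔT ^ (2 * α) :=
          Summable.tsum_le_tsum hterm hL hR
      _ = (∑' n : ℕ, ((Real.pi * ((n : ℝ) + 1)) ^ 2) ^ e) * ΔT ^ (2 * α) :=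
          tsum_mul_right
end

section
/- Let X be an additive group, u₀ ∈ X, and let F, G : ℕ × X → X be arbitrary maps. Define the reference sequence by uref_0 = u₀ and uref_{n+1} = F(n, uref_n), and the parareal sequences by u_n^{(0)} arbitrary with u_0^{(0)} = u₀, and for k ≥ 0: u_0^{(k+1)} = u₀ and u_{n+1}^{(k+1)} = G(n, u_n^{(k+1)}) + F(n, u_n^{(k)}) − G(n, u_n^{(k)}). Then for every k and every n ≤ k, u_n^{(k)} = uref_n. -/
theorem stmt_13 {X : Type*} [AddCommGroup X] (u0 : X) (F G : ℕ → X → X)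
    (uref : ℕ → X) (huref0 : uref 0 = u0) (hurefS : ∀ n, uref (n + 1) = F n (uref n))
    (u : ℕ → ℕ → X) (hu0 : ∀ k, u k 0 = u0)
    (hrec : ∀ k n, u (k + 1) (n + 1) = G n (u (k + 1) n) + F n (u k n) - G n (u k n)) :
    ∀ k n, n ≤ k → u k n = uref n := by
  intro k
  induction k with
  | zero => intro n hn; interval_cases n; rw [hu0, huref0]
  | succ k ih =>
    intro n
    induction n with
    | zero => intro _; rw [hu0, huref0]
    | succ n ihn =>
      intro hn
      have hn' : n ≤ k := Nat.succ_le_succ_iff.mp hn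
      rw [hrec, ih n hn', ihn (hn'.trans (Nat.le_succ k)), hurefS]
      abel
end

section
/- Scalar parareal recursion bound: let x > 0, C₀ ≥ 0, and suppose sequences (ε_n^{(k)})_{n≥0,k≥0} of nonnegative reals satisfy ε_0^{(k)} = 0 for all k, and ε_n^{(k+1)} ≤ R · ∑_{m=0}^{n−1} (1+x)^{−(n−1−m)} · ε_m^{(k)} for all n ≥ 1 and k ≥ 0, where R ≤ min(1, x²). If sup_n ε_n^{(0)} ≤ C₀, then for every k, sup_n ε_n^{(k)} ≤ 2^k · min(1, x)^k · C₀. -/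
/-!
Each parareal iteration multiplies the sup-norm bound on the errors by at most `2 · min(1, x)`:
the weights `(1 + x)^{-(n-1-m)}` form a truncated geometric series with sum below `(1 + x)/x`,
and `min(1, x²) · (1 + x)/x ≤ 2 · min(1, x)`. Induction on `k` finishes the proof.
-/

open Finset

lemma sum_range_pow_reflect_le {K : Type*} [Field K] [LinearOrder K] [IsStrictOrderedRing K]
    {q : K} (hq0 : 0 ≤ q) (hq1 : q < 1) (n : ℕ) :
    ∑ m ∈ range n, q ^ (n - 1 - m) ≤ (1 - q)⁻¹ := by
  rw [sum_range_reflect (q ^ ·) n, range_eq_Ico]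
  simpa using geom_sum_Ico_le_of_lt_one (m := 0) (n := n) hq0 hq1

lemma sum_range_inv_one_add_pow_le {x : ℝ} (hx : 0 < x) (n : ℕ) :
    ∑ m ∈ range n, ((1 + x) ^ (n - 1 - m))⁻¹ ≤ (1 + x) / x := by
  have hq1 : (1 + x)⁻¹ < 1 := inv_lt_one_of_one_lt₀ (by linarith)
  have hsum := sum_range_pow_reflect_le (by positivity) hq1 n
  simp only [inv_pow] at hsum
  have hlimit : (1 - (1 + x)⁻¹)⁻¹ = (1 + x) / x := by
    have : 1 + x ≠ 0 := by positivity
    rw [inv_eq_iff_eq_inv, inv_div]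
    field_simp
    ring
  exact hlimit ▸ hsum

lemma sum_range_inv_one_add_pow_mul_le {x B : ℝ} (hx : 0 < x) (hB : 0 ≤ B) {a : ℕ → ℝ}
    (ha : ∀ m, a m ≤ B) (n : ℕ) :
    ∑ m ∈ range n, ((1 + x) ^ (n - 1 - m))⁻¹ * a m ≤ (1 + x) / x * B :=
  calc ∑ m ∈ range n, ((1 + x) ^ (n - 1 - m))⁻¹ * a m
      ≤ ∑ m ∈ range n, ((1 + x) ^ (n - 1 - m))⁻¹ * B :=
        sum_le_sum fun m _ => mul_le_mul_of_nonneg_left (ha m) (by positivity)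
    _ = (∑ m ∈ range n, ((1 + x) ^ (n - 1 - m))⁻¹) * B := (sum_mul ..).symm
    _ ≤ (1 + x) / x * B := mul_le_mul_of_nonneg_right (sum_range_inv_one_add_pow_le hx n) hB

lemma min_one_sq_mul_one_add_div_le {x : ℝ} (hx : 0 < x) :
    min 1 (x ^ 2) * ((1 + x) / x) ≤ 2 * min 1 x := by
  rcases le_total x 1 with h | h
  · rw [min_eq_right (by nlinarith), min_eq_right h,
      show x ^ 2 * ((1 + x) / x) = x * (1 + x) by field_simp]
    nlinarith
  · rw [min_eq_left (by nlinarith), min_eq_left h, one_mul, div_le_iff₀ hx]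
    linarith

lemma parareal_step_le {x R B : ℝ} (hx : 0 < x) (hR : R ≤ min 1 (x ^ 2)) (hB : 0 ≤ B)
    {a : ℕ → ℝ} (ha0 : ∀ m, 0 ≤ a m) (ha : ∀ m, a m ≤ B) (n : ℕ) :
    R * ∑ m ∈ range n, ((1 + x) ^ (n - 1 - m))⁻¹ * a m ≤ 2 * min 1 x * B := by
  have hS0 : 0 ≤ ∑ m ∈ range n, ((1 + x) ^ (n - 1 - m))⁻¹ * a m :=
    sum_nonneg fun m _ => mul_nonneg (by positivity) (ha0 m)
  calc R * ∑ m ∈ range n, ((1 + x) ^ (n - 1 - m))⁻¹ * a m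
      ≤ min 1 (x ^ 2) * ((1 + x) / x * B) :=
        mul_le_mul hR (sum_range_inv_one_add_pow_mul_le hx hB ha n) hS0 (by positivity)
    _ = min 1 (x ^ 2) * ((1 + x) / x) * B := by ring
    _ ≤ 2 * min 1 x * B := mul_le_mul_of_nonneg_right (min_one_sq_mul_one_add_div_le hx) hB

theorem stmt_17_general (x : ℝ) (hx : 0 < x) (C0 : ℝ) (R : ℝ)
    (hR : R ≤ min 1 (x ^ 2)) (ε : ℕ → ℕ → ℝ) (hpos : ∀ k n, 0 ≤ ε k n)
    (hinit : ∀ k, ε k 0 = 0)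
    (hrec : ∀ k, ∀ n, 1 ≤ n →
      ε (k + 1) n ≤ R * ∑ m ∈ Finset.range n, ((1 + x) ^ (n - 1 - m))⁻¹ * ε k m)
    (hsup : ∀ n, ε 0 n ≤ C0) :
    ∀ k n, ε k n ≤ 2 ^ k * (min 1 x) ^ k * C0 := by
  have hC0 : 0 ≤ C0 := hinit 0 ▸ hsup 0
  intro k
  induction k with
  | zero => simpa using hsup
  | succ k ih =>
    intro n
    have hbound : 0 ≤ 2 ^ k * (min 1 x) ^ k * C0 := by positivity
    rw [show (2 : ℝ) ^ (k + 1) * (min 1 x) ^ (k + 1) * C0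
        = 2 * min 1 x * (2 ^ k * (min 1 x) ^ k * C0) by ring]
    rcases Nat.eq_zero_or_pos n with rfl | hn
    · rw [hinit]
      positivity
    · exact (hrec k n hn).trans (parareal_step_le hx hR hbound (hpos k) ih n)

theorem stmt_17 (x : ℝ) (hx : 0 < x) (C0 : ℝ) (hC0 : 0 ≤ C0) (R : ℝ)
    (hR : R ≤ min 1 (x ^ 2)) (ε : ℕ → ℕ → ℝ) (hpos : ∀ k n, 0 ≤ ε k n)
    (hinit : ∀ k, ε k 0 = 0)
    (hrec : ∀ k, ∀ n, 1 ≤ n →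
      ε (k + 1) n ≤ R * ∑ m ∈ Finset.range n, ((1 + x) ^ (n - 1 - m))⁻¹ * ε k m)
    (hsup : ∀ n, ε 0 n ≤ C0) :
    ∀ k n, ε k n ≤ 2 ^ k * (min 1 x) ^ k * C0 :=
  stmt_17_general x hx C0 R hR ε hpos hinit hrec hsup
end
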